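/- arXiv:1302.2170 — 4 statements merged into one kernel-verified Lean document; each statement's English description precedes it below -/
import Mathlib

section
/- Let R be a local Noetherian ring and M, N finitely generated R-modules with M ⊗_R N torsion-free. Then (M/torsion(M)) ⊗_R (N/torsion(N)) is isomorphic to M ⊗_R N; in particular all four modules M ⊗_R N, (M/torsion(M)) ⊗_R N, M ⊗_R (N/torsion(N)), and (M/torsion(M)) ⊗_R (N/torsion(N)) are torsion-free. -/
/-!
The kernel of `M ⊗ N → (M/T(M)) ⊗ (N/T(N))` is spanned by the images of `T(M) ⊗ N` and
`M ⊗ T(N)`, and these consist of torsion elements, since `r • m = 0` gives `r • (m ⊗ n) = 0`.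
So when `M ⊗ N` is torsion-free the kernel vanishes, and the same holds for the one-sided maps
`M ⊗ N → (M/T(M)) ⊗ N` and `M ⊗ N → M ⊗ (N/T(N))`. All three maps are surjective, hence
isomorphisms, and torsion-freeness transports along them.
-/

open TensorProduct LinearMap

namespace Submodule

section Torsion'

variable {R M N : Type*} [CommSemiring R] [AddCommMonoid M] [Module R M]
  [AddCommMonoid N] [Module R N] (S : Submonoid R)

theorem torsion'_le_comap (f : M →ₗ[R] N) : torsion' R M S ≤ (torsion' R N S).comap f := by
  rintro x ⟨s, hs⟩
  exact ⟨s, by rw [← map_smul_of_tower, hs, map_zero]⟩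

theorem range_rTensor_torsion'_subtype_le :
    range (rTensor N (torsion' R M S).subtype) ≤ torsion' R (M ⊗[R] N) S := by
  rintro _ ⟨y, rfl⟩
  induction y using TensorProduct.induction_on with
  | zero => simp
  | tmul m n => exact torsion'_le_comap S ((TensorProduct.mk R M N).flip n) m.2
  | add a b ha hb => rw [map_add]; exact add_mem ha hb

theorem range_lTensor_torsion'_subtype_le :
    range (lTensor M (torsion' R N S).subtype) ≤ torsion' R (M ⊗[R] N) S := by
  rintro _ ⟨y, rfl⟩
  induction y using TensorProduct.induction_on with
  | zero => simp
  | tmul m n => exact torsion'_le_comap S (TensorProduct.mk R M N m) n.2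
  | add a b ha hb => rw [map_add]; exact add_mem ha hb

end Torsion'

section Torsion

variable {R A B : Type*} [CommRing R] [AddCommGroup A] [Module R A] [AddCommGroup B] [Module R B]

theorem torsion_eq_bot_of_injective {f : A →ₗ[R] B} (hf : Function.Injective f)
    (hB : torsion R B = ⊥) : torsion R A = ⊥ := by
  rw [eq_bot_iff]
  intro x hx
  have hfx : f x ∈ torsion R B := torsion'_le_comap _ f hx
  rw [hB, mem_bot] at hfx
  exact (mem_bot R).mpr (hf (by rw [hfx, map_zero]))

theorem torsion_eq_bot_of_bijective {f : A →ₗ[R] B} (hf : Function.Bijective f)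
    (hA : torsion R A = ⊥) : torsion R B = ⊥ :=
  torsion_eq_bot_of_injective (LinearEquiv.ofBijective f hf).symm.injective hA

theorem bijective_of_ker_le_torsion {f : A →ₗ[R] B} (hA : torsion R A = ⊥)
    (hf : Function.Surjective f) (hker : ker f ≤ torsion R A) : Function.Bijective f :=
  ⟨ker_eq_bot.mp (le_bot_iff.mp (hA ▸ hker)), hf⟩

end Torsion

end Submodule

open Submodule

theorem stmt1_general (R : Type) [CommRing R]
    (M N : Type) [AddCommGroup M] [Module R M] [AddCommGroup N] [Module R N]
    (h : Submodule.torsion R (TensorProduct R M N) = ⊥) :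
    Function.Bijective
      (TensorProduct.map (Submodule.torsion R M).mkQ (Submodule.torsion R N).mkQ) ∧
    Submodule.torsion R (TensorProduct R (M ⧸ Submodule.torsion R M) N) = ⊥ ∧
    Submodule.torsion R (TensorProduct R M (N ⧸ Submodule.torsion R N)) = ⊥ ∧
    Submodule.torsion R
      (TensorProduct R (M ⧸ Submodule.torsion R M) (N ⧸ Submodule.torsion R N)) = ⊥ := by
  have hTM := range_rTensor_torsion'_subtype_le (R := R) (M := M) (N := N) (nonZeroDivisors R)
  have hTN := range_lTensor_torsion'_subtype_le (R := R) (M := M) (N := N) (nonZeroDivisors R)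
  have hboth : Function.Bijective (map (torsion R M).mkQ (torsion R N).mkQ) := by
    refine bijective_of_ker_le_torsion h (map_surjective (mkQ_surjective _) (mkQ_surjective _)) ?_
    rw [map_ker (exact_subtype_mkQ _) (mkQ_surjective _) (exact_subtype_mkQ _) (mkQ_surjective _)]
    exact sup_le hTN hTM
  have hleft : Function.Bijective (rTensor N (torsion R M).mkQ) :=
    bijective_of_ker_le_torsion h (rTensor_surjective N (mkQ_surjective _))
      (by rw [rTensor_mkQ]; exact hTM)
  have hright : Function.Bijective (lTensor M (torsion R N).mkQ) :=
    bijective_of_ker_le_torsion h (lTensor_surjective M (mkQ_surjective _))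
      (by rw [lTensor_mkQ]; exact hTN)
  exact ⟨hboth, torsion_eq_bot_of_bijective hleft h, torsion_eq_bot_of_bijective hright h,
    torsion_eq_bot_of_bijective hboth h⟩

/-- If `M ⊗[R] N` is torsion-free, then `(M/torsion M) ⊗ (N/torsion N) ≅ M ⊗ N`
(via the natural map) and all four modules are torsion-free. -/
theorem stmt1 (R : Type) [CommRing R] [IsNoetherianRing R] [IsLocalRing R]
    (M N : Type) [AddCommGroup M] [Module R M] [AddCommGroup N] [Module R N]
    [Module.Finite R M] [Module.Finite R N]
    (h : Submodule.torsion R (TensorProduct R M N) = ⊥) :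
    Function.Bijective
      (TensorProduct.map (Submodule.torsion R M).mkQ (Submodule.torsion R N).mkQ) ∧
    Submodule.torsion R (TensorProduct R (M ⧸ Submodule.torsion R M) N) = ⊥ ∧
    Submodule.torsion R (TensorProduct R M (N ⧸ Submodule.torsion R N)) = ⊥ ∧
    Submodule.torsion R
      (TensorProduct R (M ⧸ Submodule.torsion R M) (N ⧸ Submodule.torsion R N)) = ⊥ :=
  stmt1_general R M N h
end

section
/- Let R = k[[x,y]]/(xy) over a field k and N = R/(x²). Then N is not torsion-free: the coset of x in N is a nonzero element annihilated by the non-zerodivisor x + y. Nevertheless M ⊗_R N is torsion-free, where M = R/(x). -/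
/-!
In `S = k[[x,y]]` the variables `x` and `y` are non-associate primes. Hence in `R = S/(xy)` the
element `x + y` is a non-zerodivisor (`xy ∣ f(x + y)` forces `x ∣ f` and then `y ∣ f/x`), while
`(x + y)x = x²`. And `x ∉ (x²)` in `R`: `x = x²g + xyh` in `S` gives `1 = xg + yh`, impossible in
the local ring `S`.

For the tensor product, `R/(x) ⊗ R/(x²) ≅ R/(x)`, a quotient of `R` by a prime ideal (as
`R/(x) ≅ S/(x)`) that contains no non-zerodivisor, since `y` kills every multiple of `x`.
-/

/-- The hypersurface `R = k[[x,y]]/(xy)`. -/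
noncomputable abbrev R9 (k : Type) [Field k] :=
  MvPowerSeries (Fin 2) k ⧸
    Ideal.span {(MvPowerSeries.X 0 : MvPowerSeries (Fin 2) k) * MvPowerSeries.X 1}

/-- The image of `x` in `R = k[[x,y]]/(xy)`. -/
noncomputable abbrev xR9 (k : Type) [Field k] : R9 k :=
  Ideal.Quotient.mk _ (MvPowerSeries.X 0)

/-- The image of `y` in `R = k[[x,y]]/(xy)`. -/
noncomputable abbrev yR9 (k : Type) [Field k] : R9 k :=
  Ideal.Quotient.mk _ (MvPowerSeries.X 1)

open scoped TensorProduct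

namespace MvPowerSeries

theorem not_X_dvd_X {σ R : Type*} [Semiring R] [Nontrivial R] {i j : σ} (h : i ≠ j) :
    ¬ (X i : MvPowerSeries σ R) ∣ X j := by
  classical
  rw [X_dvd_iff]
  intro hdvd
  simpa [coeff_X] using hdvd (Finsupp.single j 1) (by simp [h])

variable {R : Type*} [CommRing R] [IsDomain R] {n : ℕ}

theorem prime_X_zero : Prime (X 0 : MvPowerSeries (Fin (n + 1)) R) := by
  have := NoZeroDivisors.to_isDomain (MvPowerSeries (Fin n) R)
  rw [← (finSuccEquiv R n).symm_apply_apply (X 0), finSuccEquiv_X_zero]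
  exact (MulEquiv.prime_iff (finSuccEquiv R n).symm).2 PowerSeries.X_prime

theorem prime_X (i : Fin (n + 1)) : Prime (X i : MvPowerSeries (Fin (n + 1)) R) := by
  simpa [renameEquiv] using (MulEquiv.prime_iff (renameEquiv R (Equiv.swap 0 i))).2 prime_X_zero

end MvPowerSeries

theorem Submodule.torsion_eq_bot_of_linearEquiv {R M N : Type*} [CommSemiring R]
    [AddCommMonoid M] [Module R M] [AddCommMonoid N] [Module R N] (e : M ≃ₗ[R] N)
    (h : torsion R N = ⊥) : torsion R M = ⊥ := by
  refine eq_bot_iff.2 fun m ⟨a, ha⟩ => (mem_bot R).2 (e.map_eq_zero_iff.1 ?_)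
  rw [← mem_bot R, ← h]
  exact ⟨a, by rw [Submonoid.smul_def, ← map_smul, ← Submonoid.smul_def, ha, map_zero]⟩

namespace Ideal

variable {R : Type*} [CommRing R]

theorem torsion_quotient_eq_bot {P : Ideal R} (hP : P.IsPrime)
    (h : ∀ a ∈ nonZeroDivisors R, a ∉ P) : Submodule.torsion R (R ⧸ P) = ⊥ := by
  refine eq_bot_iff.2 fun q ⟨a, ha⟩ => ?_
  obtain ⟨r, rfl⟩ := Quotient.mk_surjective q
  have har : (a : R) * r ∈ P := Quotient.eq_zero_iff_mem.1 ha
  exact (Submodule.mem_bot R).2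
    (Quotient.eq_zero_iff_mem.2 ((hP.mem_or_mem har).resolve_left (h a a.2)))

noncomputable def quotTensorQuotEquivOfLE {I J : Ideal R} (h : J ≤ I) :
    (R ⧸ I) ⊗[R] (R ⧸ J) ≃ₗ[R] R ⧸ I :=
  TensorProduct.quotTensorEquivQuotSMul (R ⧸ J) I ≪≫ₗ
    Submodule.quotEquivOfEq _ _ (by
      rw [← Submodule.range_mkQ J, LinearMap.range_eq_map, ← Submodule.map_smul'',
        smul_eq_mul, mul_top]) ≪≫ₗ
    Submodule.quotientQuotientEquivQuotient J I h

end Ideal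

section QuotientByProduct

variable {S : Type*} [CommRing S] {x y : S}

theorem mul_dvd_of_mul_dvd_mul_add (hx : Prime x) (hy : Prime y) (hxy : ¬ x ∣ y) (hyx : ¬ y ∣ x)
    {f : S} (h : x * y ∣ f * (x + y)) : x * y ∣ f := by
  obtain ⟨g, rfl⟩ : x ∣ f := (hx.dvd_or_dvd (dvd_of_mul_right_dvd h)).resolve_right
    fun hxs => hxy ((dvd_add_right (dvd_refl x)).1 hxs)
  have hyxg : y ∣ x * g := (hy.dvd_or_dvd (dvd_of_mul_left_dvd h)).resolve_right
    fun hys => hyx ((dvd_add_left (dvd_refl y)).1 hys)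
  exact mul_dvd_mul_left x ((hy.dvd_or_dvd hyxg).resolve_left hyx)

theorem mk_add_mem_nonZeroDivisors (hx : Prime x) (hy : Prime y) (hxy : ¬ x ∣ y)
    (hyx : ¬ y ∣ x) :
    Ideal.Quotient.mk (Ideal.span {x * y}) (x + y) ∈ nonZeroDivisors (S ⧸ Ideal.span {x * y}) := by
  refine mem_nonZeroDivisors_iff_right.2 fun a ha => ?_
  obtain ⟨f, rfl⟩ := Ideal.Quotient.mk_surjective a
  rw [← map_mul] at ha
  rw [Ideal.Quotient.eq_zero_iff_mem, Ideal.mem_span_singleton] at ha ⊢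
  exact mul_dvd_of_mul_dvd_mul_add hx hy hxy hyx ha

theorem mk_mul_mk_eq_zero :
    Ideal.Quotient.mk (Ideal.span {x * y}) x * Ideal.Quotient.mk (Ideal.span {x * y}) y = 0 := by
  rw [← map_mul, Ideal.Quotient.eq_zero_iff_mem]
  exact Ideal.mem_span_singleton_self _

theorem add_smul_mk_mod_sq_eq_zero :
    (Ideal.Quotient.mk (Ideal.span {x * y}) x + Ideal.Quotient.mk (Ideal.span {x * y}) y) •
      Ideal.Quotient.mk (Ideal.span {Ideal.Quotient.mk (Ideal.span {x * y}) x ^ 2})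
        (Ideal.Quotient.mk (Ideal.span {x * y}) x) = 0 := by
  refine Ideal.Quotient.eq_zero_iff_mem.2 (Ideal.mem_span_singleton.2 ⟨1, ?_⟩)
  show _ * _ = _
  linear_combination mk_mul_mk_eq_zero (x := x) (y := y)

theorem mk_ne_zero_mod_sq [IsDomain S] [IsLocalRing S] (hx : Prime x) (hy : ¬ IsUnit y) :
    Ideal.Quotient.mk (Ideal.span {Ideal.Quotient.mk (Ideal.span {x * y}) x ^ 2})
      (Ideal.Quotient.mk (Ideal.span {x * y}) x) ≠ 0 := by
  rw [Ne, Ideal.Quotient.eq_zero_iff_mem, Ideal.mem_span_singleton]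
  rintro ⟨c, hc⟩
  obtain ⟨g, rfl⟩ := Ideal.Quotient.mk_surjective c
  rw [← map_pow, ← map_mul, Ideal.Quotient.eq, Ideal.mem_span_singleton] at hc
  obtain ⟨h, hh⟩ := hc
  have hone : x * g + y * h = 1 := by
    apply mul_left_cancel₀ hx.ne_zero
    linear_combination -hh
  refine (IsLocalRing.maximalIdeal.isMaximal S).ne_top ((Ideal.eq_top_iff_one _).2 ?_)
  rw [← hone]
  exact add_mem (Ideal.mul_mem_right _ _ ((IsLocalRing.mem_maximalIdeal _).2 hx.not_isUnit))
    (Ideal.mul_mem_right _ _ ((IsLocalRing.mem_maximalIdeal _).2 hy))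

theorem isPrime_span_mk (hx : Prime x) :
    (Ideal.span {Ideal.Quotient.mk (Ideal.span {x * y}) x}).IsPrime := by
  have := (Ideal.span_singleton_prime hx.ne_zero).2 hx
  have hmap : Ideal.span {Ideal.Quotient.mk (Ideal.span {x * y}) x} =
      (Ideal.span {x}).map (Ideal.Quotient.mk (Ideal.span {x * y})) := by
    rw [Ideal.map_span, Set.image_singleton]
  rw [hmap]
  refine Ideal.map_isPrime_of_surjective Ideal.Quotient.mk_surjective ?_
  rw [Ideal.mk_ker]
  exact Ideal.span_singleton_le_span_singleton.2 (dvd_mul_right x y)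

theorem notMem_span_mk_of_mem_nonZeroDivisors [IsDomain S] (hx : ¬ IsUnit x) (hy : y ≠ 0)
    {a : S ⧸ Ideal.span {x * y}} (ha : a ∈ nonZeroDivisors (S ⧸ Ideal.span {x * y})) :
    a ∉ Ideal.span {Ideal.Quotient.mk (Ideal.span {x * y}) x} := by
  intro ha'
  obtain ⟨c, rfl⟩ := Ideal.mem_span_singleton'.1 ha'
  have hy_zero : Ideal.Quotient.mk (Ideal.span {x * y}) y = 0 :=
    mem_nonZeroDivisors_iff_right.1 ha _
      (by linear_combination c * mk_mul_mk_eq_zero (x := x) (y := y))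
  rw [Ideal.Quotient.eq_zero_iff_mem, Ideal.mem_span_singleton] at hy_zero
  exact hx (isUnit_of_dvd_one ((mul_dvd_mul_iff_right hy).1 (by rwa [one_mul])))

theorem torsion_quotient_span_mk_eq_bot [IsDomain S] (hx : Prime x) (hy : y ≠ 0) :
    Submodule.torsion (S ⧸ Ideal.span {x * y})
      ((S ⧸ Ideal.span {x * y}) ⧸ Ideal.span {Ideal.Quotient.mk (Ideal.span {x * y}) x}) = ⊥ :=
  Ideal.torsion_quotient_eq_bot (isPrime_span_mk hx) fun _ ha =>
    notMem_span_mk_of_mem_nonZeroDivisors hx.not_isUnit hy ha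

end QuotientByProduct

/-- For `R = k[[x,y]]/(xy)`, `N = R/(x²)` is not torsion-free: the coset of `x` is a nonzero
element killed by the non-zerodivisor `x + y`; nevertheless `M ⊗_R N` is torsion-free, where
`M = R/(x)`. -/
theorem stmt9 (k : Type) [Field k] :
    (Ideal.Quotient.mk (Ideal.span {xR9 k ^ 2}) (xR9 k) ≠ 0) ∧
    (xR9 k + yR9 k ∈ nonZeroDivisors (R9 k)) ∧
    ((xR9 k + yR9 k) • Ideal.Quotient.mk (Ideal.span {xR9 k ^ 2}) (xR9 k) = 0) ∧
    Submodule.torsion (R9 k) (R9 k ⧸ Ideal.span {xR9 k ^ 2}) ≠ ⊥ ∧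
    Submodule.torsion (R9 k)
      (TensorProduct (R9 k) (R9 k ⧸ Ideal.span {xR9 k}) (R9 k ⧸ Ideal.span {xR9 k ^ 2})) = ⊥ := by
  have := NoZeroDivisors.to_isDomain (MvPowerSeries (Fin 2) k)
  have hx : Prime (MvPowerSeries.X 0 : MvPowerSeries (Fin 2) k) := MvPowerSeries.prime_X 0
  have hy : Prime (MvPowerSeries.X 1 : MvPowerSeries (Fin 2) k) := MvPowerSeries.prime_X 1
  have hne : Ideal.Quotient.mk (Ideal.span {xR9 k ^ 2}) (xR9 k) ≠ 0 :=
    mk_ne_zero_mod_sq hx hy.not_isUnit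
  have hnzd : xR9 k + yR9 k ∈ nonZeroDivisors (R9 k) := by
    simpa only [map_add] using mk_add_mem_nonZeroDivisors hx hy
      (MvPowerSeries.not_X_dvd_X (by decide)) (MvPowerSeries.not_X_dvd_X (by decide))
  have hkill := add_smul_mk_mod_sq_eq_zero (x := (MvPowerSeries.X 0 : MvPowerSeries (Fin 2) k))
    (y := MvPowerSeries.X 1)
  refine ⟨hne, hnzd, hkill, fun htors => hne ?_, ?_⟩
  · rw [← Submodule.mem_bot (R9 k), ← htors]
    exact ⟨⟨_, hnzd⟩, hkill⟩
  · have hle : Ideal.span {xR9 k ^ 2} ≤ Ideal.span {xR9 k} :=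
      Ideal.span_singleton_le_span_singleton.2 (dvd_pow_self _ two_ne_zero)
    exact Submodule.torsion_eq_bot_of_linearEquiv (Ideal.quotTensorQuotEquivOfLE hle)
      (torsion_quotient_span_mk_eq_bot hx hy.ne_zero)
end

section
/- Let R be a local Noetherian ring and M a finitely generated R-module. The natural map M ⊗_R M* → Hom_R(M,M), sending x ⊗ f to the endomorphism y ↦ f(y)·x, is an isomorphism if and only if M is free. -/
open TensorProduct LinearMap

/-- The natural map `M ⊗_R M* → Hom_R(M,M)`, `x ⊗ f ↦ (y ↦ f(y) • x)`, is an isomorphism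
if and only if `M` is free. -/
theorem stmt14 (R : Type) [CommRing R] [IsNoetherianRing R] [IsLocalRing R]
    (M : Type) [AddCommGroup M] [Module R M] [Module.Finite R M] :
    Function.Bijective
      ((dualTensorHom R M M).comp
        (TensorProduct.comm R M (Module.Dual R M)).toLinearMap) ↔ Module.Free R M := by
  classical
  constructor
  · intro h
    -- surjectivity gives a preimage of the identity
    obtain ⟨t, ht⟩ := h.2 LinearMap.id
    obtain ⟨s, hs⟩ := TensorProduct.exists_finset
      ((TensorProduct.comm R M (Module.Dual R M)).toLinearMap t)
    -- split M off a finite free module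
    have hid : dualTensorHom R M M
        ((TensorProduct.comm R M (Module.Dual R M)).toLinearMap t) = LinearMap.id := ht
    rw [hs] at hid
    let i : M →ₗ[R] (s → R) := LinearMap.pi fun p => (p : Module.Dual R M × M).1
    let π : (s → R) →ₗ[R] M :=
      ∑ p : s, (LinearMap.proj p).smulRight (p : Module.Dual R M × M).2
    have hsplit : π.comp i = LinearMap.id := by
      ext m
      have := LinearMap.congr_fun hid m
      simp only [map_sum, LinearMap.sum_apply, dualTensorHom_apply, LinearMap.id_apply] at this
      simp only [π, i, LinearMap.comp_apply, LinearMap.sum_apply, LinearMap.smulRight_apply,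
        LinearMap.proj_apply, LinearMap.pi_apply, LinearMap.id_apply]
      exact (Finset.sum_coe_sort s (fun p => p.1 m • p.2)).trans this
    have : Module.Projective R M := Module.Projective.of_split i π hsplit
    have : Module.FinitePresentation R M := Module.finitePresentation_of_projective R M
    exact Module.free_of_flat_of_isLocalRing
  · intro h
    let b := Module.Free.chooseBasis R M
    rw [LinearMap.coe_comp]
    refine Function.Bijective.comp ?_ (TensorProduct.comm R M (Module.Dual R M)).bijective
    rw [← dualTensorHomEquivOfBasis_toLinearMap b]
    exact (dualTensorHomEquivOfBasis b).bijective
end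

section
/- Let R = k[[t^9, t^11, t^13, t^15, t^17, t^19, t^21, t^23]], I = (t^9, t^11, t^13, t^21)R, and J = (t^15, t^17, t^19, t^23)R. Then I ∩ J = I·J, and consequently Tor_1^R(R/I, R/J) = 0. -/
set_option maxHeartbeats 2000000
set_option synthInstance.maxHeartbeats 1000000

open CategoryTheory

/-- `Tor_i^R(M,N)` as an object of `ModuleCat R`. -/
noncomputable def TorM (R : Type) [CommRing R] (i : ℕ) (M N : Type) [AddCommGroup M] [Module R M]
    [AddCommGroup N] [Module R N] : ModuleCat R :=
  ((Tor (ModuleCat R) i).obj (ModuleCat.of R M)).obj (ModuleCat.of R N)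

/-- The generators `t⁹, t¹¹, t¹³, t¹⁵, t¹⁷, t¹⁹, t²¹, t²³` of the semigroup ring. -/
noncomputable def gens16 (k : Type) [Field k] : Set (PowerSeries k) :=
  {PowerSeries.X ^ 9, PowerSeries.X ^ 11, PowerSeries.X ^ 13, PowerSeries.X ^ 15,
    PowerSeries.X ^ 17, PowerSeries.X ^ 19, PowerSeries.X ^ 21, PowerSeries.X ^ 23}

/-- The numerical semigroup ring `R = k[[t⁹,t¹¹,t¹³,t¹⁵,t¹⁷,t¹⁹,t²¹,t²³]] ⊆ k[[t]]`. -/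
noncomputable def R16 (k : Type) [Field k] : Subalgebra k (PowerSeries k) :=
  Algebra.adjoin k (gens16 k)

/-- The element `tⁿ` of `R16 k`, for `n` a generating exponent. -/
noncomputable def t16 (k : Type) [Field k] (n : ℕ)
    (h : (PowerSeries.X : PowerSeries k) ^ n ∈ gens16 k) : R16 k :=
  ⟨PowerSeries.X ^ n, Algebra.subset_adjoin h⟩

/-- The ideal `I = (t⁹, t¹¹, t¹³, t²¹)` of `R16 k`. -/
noncomputable def I16 (k : Type) [Field k] : Ideal (R16 k) :=
  Ideal.span {t16 k 9 (Set.mem_insert _ _),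
    t16 k 11 (Set.mem_insert_of_mem _ (Set.mem_insert _ _)),
    t16 k 13 (Set.mem_insert_of_mem _ (Set.mem_insert_of_mem _ (Set.mem_insert _ _))),
    t16 k 21 (Set.mem_insert_of_mem _ (Set.mem_insert_of_mem _ (Set.mem_insert_of_mem _
      (Set.mem_insert_of_mem _ (Set.mem_insert_of_mem _ (Set.mem_insert_of_mem _
        (Set.mem_insert _ _)))))))}

/-- The ideal `J = (t¹⁵, t¹⁷, t¹⁹, t²³)` of `R16 k`. -/
noncomputable def J16 (k : Type) [Field k] : Ideal (R16 k) :=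
  Ideal.span {t16 k 15 (Set.mem_insert_of_mem _ (Set.mem_insert_of_mem _
      (Set.mem_insert_of_mem _ (Set.mem_insert _ _)))),
    t16 k 17 (Set.mem_insert_of_mem _ (Set.mem_insert_of_mem _ (Set.mem_insert_of_mem _
      (Set.mem_insert_of_mem _ (Set.mem_insert _ _))))),
    t16 k 19 (Set.mem_insert_of_mem _ (Set.mem_insert_of_mem _ (Set.mem_insert_of_mem _
      (Set.mem_insert_of_mem _ (Set.mem_insert_of_mem _ (Set.mem_insert _ _)))))),
    t16 k 23 (Set.mem_insert_of_mem _ (Set.mem_insert_of_mem _ (Set.mem_insert_of_mem _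
      (Set.mem_insert_of_mem _ (Set.mem_insert_of_mem _ (Set.mem_insert_of_mem _
        (Set.mem_insert_of_mem _ rfl)))))))}

/-!
`R16 k` is spanned by the monomials `tˢ` with `s` in the numerical semigroup `S = ⟨9, 11, …, 23⟩`,
and an ideal generated by monomials `tᵃ` (`a ∈ A`) only contains series supported in `A + S`.
Conversely an element of `R16 k` lies in an ideal as soon as every monomial of its support does.
So `I ∩ J = I J` reduces to the inclusion of exponent sets
`({9, 11, 13, 21} + S) ∩ ({15, 17, 19, 23} + S) ⊆ {9, 11, 13, 21} + {15, 17, 19, 23} + S`,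
which is linear arithmetic once `S` is described explicitly.

For `Tor`, splice a projective resolution `Q` of `J` with `J ↪ R` into a resolution
`⋯ → Q₁ → Q₀ → R` of `R ⧸ J`. After tensoring with `R ⧸ I`, right exactness identifies the
first homology with the kernel of `R ⧸ I ⊗ J → R ⧸ I`, which is `(I ∩ J) / I J`.
-/

universe u

open Limits

namespace CategoryTheory.ProjectiveResolution

variable {R : Type u} [CommRing R] {P : Type u} [AddCommGroup P] [Module R P]
  {N : Submodule R P} (Q : ProjectiveResolution (ModuleCat.of R N))

/-- `Q.π` in degree `0`, typed with target `N` rather than `((single₀ _).obj N).X 0`. -/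
noncomputable def augmentation :
    {f : Q.complex.X 0 ⟶ ModuleCat.of R N // Q.complex.d 1 0 ≫ f = 0} :=
  ChainComplex.toSingle₀Equiv _ _ Q.π

lemma augmentation_surjective : Function.Surjective Q.augmentation.1 :=
  (ModuleCat.epi_iff_surjective _).1 (inferInstanceAs (Epi (Q.π.f 0)))

lemma exact_augmentation : Function.Exact (Q.complex.d 1 0) Q.augmentation.1 :=
  (ShortComplex.ShortExact.moduleCat_exact_iff_function_exact _).1 Q.exact₀

noncomputable def quotientComplex : ChainComplex (ModuleCat.{u} R) ℕ :=
  Q.complex.augment (Q.augmentation.1 ≫ ModuleCat.ofHom N.subtype)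
    (by rw [reassoc_of% Q.augmentation.2, zero_comp])

lemma quotientComplex_exactAt_succ : ∀ n, Q.quotientComplex.ExactAt (n + 1)
  | 0 => by
    rw [HomologicalComplex.exactAt_iff' _ 2 1 0 (by simp) (by simp),
      ShortComplex.moduleCat_exact_iff]
    intro x hx
    exact (Q.exact_augmentation x).1 (N.injective_subtype (hx.trans (map_zero _).symm))
  | n + 1 => by
    have h := Q.complex_exactAt_succ n
    rw [HomologicalComplex.exactAt_iff' _ (n + 2) (n + 1) n (by simp) (by simp)] at h
    rwa [HomologicalComplex.exactAt_iff' _ (n + 3) (n + 2) (n + 1) (by simp) (by simp)]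

lemma quotientComplex_d_one_zero_mkQ :
    Q.quotientComplex.d 1 0 ≫ ModuleCat.ofHom N.mkQ = 0 :=
  ModuleCat.hom_ext <| LinearMap.ext fun x =>
    (Submodule.Quotient.mk_eq_zero N).2 (Q.augmentation.1 x).2

noncomputable def quotientπ :
    Q.quotientComplex ⟶ (ChainComplex.single₀ _).obj (ModuleCat.of R (P ⧸ N)) :=
  (ChainComplex.toSingle₀Equiv _ _).symm
    ⟨ModuleCat.ofHom N.mkQ, Q.quotientComplex_d_one_zero_mkQ⟩

instance : QuasiIso Q.quotientπ where
  quasiIsoAt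
  | 0 => by
    rw [ChainComplex.quasiIsoAt₀_iff, ShortComplex.quasiIso_iff_of_zeros' _ rfl rfl rfl]
    refine ⟨(ShortComplex.moduleCat_exact_iff _).2 fun x hx => ?_, ?_⟩
    · obtain ⟨y, hy⟩ := Q.augmentation_surjective ⟨x, (Submodule.Quotient.mk_eq_zero N).1 hx⟩
      exact ⟨y, congrArg Subtype.val hy⟩
    · exact (ModuleCat.epi_iff_surjective _).2 N.mkQ_surjective
  | n + 1 => by
    rw [quasiIsoAt_iff_exactAt' _ _ (ChainComplex.exactAt_succ_single_obj _ n)]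
    exact Q.quotientComplex_exactAt_succ n

/-- The projective resolution `⋯ → Q₁ → Q₀ → P` of `P ⧸ N`, with `Q₀ → P` through `N ↪ P`. -/
noncomputable def quotient [Module.Projective R P] :
    ProjectiveResolution (ModuleCat.of R (P ⧸ N)) where
  complex := Q.quotientComplex
  projective
  | 0 => inferInstanceAs (Projective (ModuleCat.of R P))
  | n + 1 => Q.projective n
  π := Q.quotientπ

end CategoryTheory.ProjectiveResolution

open MonoidalCategory in
theorem isZero_Tor_one_quotient {R : Type u} [CommRing R] {P : Type u} [AddCommGroup P]
    [Module R P] [Module.Projective R P] (N : Submodule R P) (M : ModuleCat.{u} R)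
    (h : Function.Injective (N.subtype.lTensor M)) :
    IsZero (((Tor (ModuleCat.{u} R) 1).obj M).obj (ModuleCat.of R (P ⧸ N))) := by
  let Q := ProjectiveResolution.of (ModuleCat.of R N)
  refine IsZero.of_iso ((HomologicalComplex.exactAt_iff_isZero_homology _ 1).1 ?_)
    (Q.quotient.isoLeftDerivedObj _ 1)
  rw [HomologicalComplex.exactAt_iff' _ 2 1 0 (by simp) (by simp),
    ShortComplex.moduleCat_exact_iff]
  intro x hx
  have hx' : N.subtype.lTensor M (Q.augmentation.1.hom.lTensor M x) = 0 := by
    change (M ◁ (Q.augmentation.1 ≫ ModuleCat.ofHom N.subtype)) x = 0 at hx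
    rwa [MonoidalCategory.whiskerLeft_comp] at hx
  exact (lTensor_exact M Q.exact_augmentation Q.augmentation_surjective x).1
    (h (hx'.trans (map_zero _).symm))

open PowerSeries Pointwise

namespace PowerSeries

variable {R : Type*} [Semiring R]

def support (f : R⟦X⟧) : Set ℕ := Function.support fun n => coeff n f

lemma support_add_subset (f g : R⟦X⟧) : (f + g).support ⊆ f.support ∪ g.support := by
  simpa only [support, map_add] using Function.support_add _ _

lemma support_mul_subset (f g : R⟦X⟧) : (f * g).support ⊆ f.support + g.support := by
  intro n hn
  by_contra h
  refine hn ((coeff_mul n f g).trans (Finset.sum_eq_zero fun ⟨i, j⟩ hij => ?_))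
  rw [Finset.HasAntidiagonal.mem_antidiagonal] at hij
  by_cases hi : coeff i f = 0
  · rw [hi, zero_mul]
  · by_cases hj : coeff j g = 0
    · rw [hj, mul_zero]
    · exact absurd ⟨i, hi, j, hj, hij⟩ h

lemma support_X_pow_subset (n : ℕ) : (X ^ n : R⟦X⟧).support ⊆ {n} :=
  Function.support_subset_iff'.2 fun m (hm : m ≠ n) => by simp [coeff_X_pow, hm]

lemma support_C_subset (r : R) : (C r).support ⊆ {0} :=
  Function.support_subset_iff'.2 fun m (hm : m ≠ 0) => by simp [coeff_C, hm]

end PowerSeries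

section MonomialSubalgebra

variable {k : Type*} [CommSemiring k] {G : Set ℕ}

lemma support_subset_closure_of_mem_adjoin {f : k⟦X⟧}
    (hf : f ∈ Algebra.adjoin k ((X ^ ·) '' G)) : f.support ⊆ AddSubmonoid.closure G := by
  induction hf using Algebra.adjoin_induction with
  | mem x hx =>
    obtain ⟨n, hn, rfl⟩ := hx
    exact (support_X_pow_subset n).trans
      (Set.singleton_subset_iff.2 (AddSubmonoid.subset_closure hn))
  | algebraMap r =>
    exact (support_C_subset r).trans (Set.singleton_subset_iff.2 (zero_mem _))
  | add f g _ _ hf hg => exact (support_add_subset f g).trans (Set.union_subset hf hg)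
  | mul f g _ _ hf hg =>
    exact (support_mul_subset f g).trans
      ((Set.add_subset_add hf hg).trans (AddSubmonoid.coe_add_self_eq _).subset)

lemma exists_polynomial_of_mem_adjoin {f : k⟦X⟧}
    (hf : f ∈ Algebra.adjoin k ((X ^ ·) '' G)) : ∃ p : Polynomial k, (p : k⟦X⟧) = f := by
  induction hf using Algebra.adjoin_induction with
  | mem x hx =>
    obtain ⟨n, -, rfl⟩ := hx
    exact ⟨Polynomial.X ^ n, by simp⟩
  | algebraMap r => exact ⟨Polynomial.C r, by simp⟩
  | add f g _ _ hf hg =>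
    obtain ⟨p, rfl⟩ := hf
    obtain ⟨q, rfl⟩ := hg
    exact ⟨p + q, Polynomial.coe_add p q⟩
  | mul f g _ _ hf hg =>
    obtain ⟨p, rfl⟩ := hf
    obtain ⟨q, rfl⟩ := hg
    exact ⟨p * q, Polynomial.coe_mul p q⟩

lemma X_pow_mem_adjoin {n : ℕ} (hn : n ∈ AddSubmonoid.closure G) :
    (X ^ n : k⟦X⟧) ∈ Algebra.adjoin k ((X ^ ·) '' G) := by
  induction hn using AddSubmonoid.closure_induction with
  | mem n hn => exact Algebra.subset_adjoin ⟨n, hn, rfl⟩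
  | zero => simp [one_mem]
  | add m n _ _ hm hn => simpa [pow_add] using mul_mem hm hn

end MonomialSubalgebra

section MonomialIdeals

variable {k : Type*} [CommSemiring k] {A : Subalgebra k k⟦X⟧}

def monomialExponents (K : Ideal A) : Set ℕ := {n | ∃ x ∈ K, (x : k⟦X⟧) = X ^ n}

lemma add_monomialExponents_subset {S : Set ℕ} (hS : ∀ s ∈ S, X ^ s ∈ A) (K : Ideal A) :
    S + monomialExponents K ⊆ monomialExponents K := by
  rintro _ ⟨s, hs, n, ⟨x, hx, hxn⟩, rfl⟩
  exact ⟨⟨X ^ s, hS s hs⟩ * x, K.mul_mem_left _ hx, by simp [hxn, pow_add]⟩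

lemma monomialExponents_add_subset_mul (K L : Ideal A) :
    monomialExponents K + monomialExponents L ⊆ monomialExponents (K * L) := by
  rintro _ ⟨a, ⟨x, hx, hxa⟩, b, ⟨y, hy, hyb⟩, rfl⟩
  exact ⟨x * y, Ideal.mul_mem_mul hx hy, by simp [hxa, hyb, pow_add]⟩

lemma mem_of_support_subset_monomialExponents
    (hA : ∀ a ∈ A, ∃ p : Polynomial k, (p : k⟦X⟧) = a) {K : Ideal A} {f : A}
    (hf : (f : k⟦X⟧).support ⊆ monomialExponents K) : f ∈ K := by
  classical
  obtain ⟨p, hp⟩ := hA f f.2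
  have hmem : ∀ n ∈ p.support, ∃ x ∈ K, (x : k⟦X⟧) = X ^ n := fun n hn =>
    hf (by simpa [PowerSeries.support, ← hp] using hn)
  choose! x hxK hx using hmem
  have hf : f = ∑ n ∈ p.support, p.coeff n • x n := by
    apply Subtype.ext
    rw [AddSubmonoidClass.coe_finsetSum, ← hp]
    conv_lhs => rw [p.as_sum_support]
    rw [← Polynomial.coeToPowerSeries.ringHom_apply, map_sum]
    refine Finset.sum_congr rfl fun n hn => ?_
    rw [Polynomial.coeToPowerSeries.ringHom_apply, Polynomial.coe_monomial, Subalgebra.coe_smul,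
      hx n hn, X_pow_eq, ← map_smul, smul_eq_mul, mul_one]
  rw [hf]
  exact Submodule.sum_mem _ fun n hn => K.smul_of_tower_mem _ (hxK n hn)

lemma support_subset_of_mem_span {S : AddSubmonoid ℕ} (hA : ∀ a ∈ A, (a : k⟦X⟧).support ⊆ S)
    {G : Set ℕ} {T : Set A} (hT : ∀ t ∈ T, ∃ a ∈ G, (t : k⟦X⟧) = X ^ a) {f : A}
    (hf : f ∈ Ideal.span T) : (f : k⟦X⟧).support ⊆ G + S := by
  induction hf using Submodule.span_induction with
  | mem t ht =>
    obtain ⟨a, ha, hta⟩ := hT t ht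
    rw [hta]
    exact (support_X_pow_subset a).trans
      (Set.singleton_subset_iff.2 ⟨a, ha, 0, zero_mem S, add_zero a⟩)
  | zero => simp [PowerSeries.support]
  | add f g _ _ hf hg =>
    exact (support_add_subset (f : k⟦X⟧) g).trans (Set.union_subset hf hg)
  | smul a f _ hf =>
    calc ((a : k⟦X⟧) * f).support ⊆ (S : Set ℕ) + (G + S) :=
          (support_mul_subset (a : k⟦X⟧) f).trans (Set.add_subset_add (hA a a.2) hf)
      _ = G + S := by rw [add_left_comm, AddSubmonoid.coe_add_self_eq]

end MonomialIdeals

def semigroup16 : AddSubmonoid ℕ := AddSubmonoid.closure {9, 11, 13, 15, 17, 19, 21, 23}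

lemma mem_semigroup16 {n : ℕ} :
    n ∈ semigroup16 ↔ n = 0 ∨ 9 ≤ n ∧ n ≠ 10 ∧ n ≠ 12 ∧ n ≠ 14 ∧ n ≠ 16 ∧ n ≠ 25 := by
  constructor
  · intro hn
    induction hn using AddSubmonoid.closure_induction with
    | mem n hn =>
      simp only [Set.mem_insert_iff, Set.mem_singleton_iff] at hn
      omega
    | zero => exact Or.inl rfl
    | add m n _ _ hm hn => omega
  · induction n using Nat.strong_induction_on with
    | _ n ih =>
      intro hn
      have hgen : ∀ g ∈ ({9, 11, 13, 15, 17, 19, 21, 23} : Set ℕ), g ∈ semigroup16 :=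
        fun g hg => AddSubmonoid.subset_closure hg
      -- Apart from `0`, the generators and `34 = 11 + 23`, every `n ∈ S` has `n - 9 ∈ S`.
      by_cases hsmall : n = 0 ∨ n ∈ ({9, 11, 13, 15, 17, 19, 21, 23} : Set ℕ) ∨ n = 34
      · rcases hsmall with rfl | hg | rfl
        · exact zero_mem _
        · exact hgen n hg
        · exact add_mem (hgen 11 (by simp)) (hgen 23 (by simp))
      · simp only [Set.mem_insert_iff, Set.mem_singleton_iff] at hsmall
        rw [show n = 9 + (n - 9) by omega]
        exact add_mem (hgen 9 (by simp)) (ih (n - 9) (by omega) (by omega))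

lemma Nat.exists_and_add_eq_iff {P : ℕ → Prop} {a n : ℕ} :
    (∃ y, P y ∧ a + y = n) ↔ a ≤ n ∧ P (n - a) :=
  ⟨fun ⟨y, hy, h⟩ => ⟨h ▸ Nat.le_add_right a y, by rwa [← h, Nat.add_sub_cancel_left]⟩,
    fun ⟨h, hs⟩ => ⟨n - a, hs, Nat.add_sub_cancel' h⟩⟩

lemma exponents_inter_subset :
    ({9, 11, 13, 21} + semigroup16 : Set ℕ) ∩ ({15, 17, 19, 23} + semigroup16) ⊆
      {9, 11, 13, 21} + {15, 17, 19, 23} + semigroup16 := by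
  -- Only the ten distinct sums `a + b` matter; listing them keeps `omega`'s case split small.
  have hsums : ({24, 26, 28, 30, 32, 34, 36, 38, 40, 44} : Set ℕ) ⊆
      {9, 11, 13, 21} + {15, 17, 19, 23} := by
    rintro c (rfl | rfl | rfl | rfl | rfl | rfl | rfl | rfl | rfl | rfl)
    all_goals simp [Set.mem_add]
  refine subset_trans (fun n => ?_) (Set.add_subset_add_right hsums)
  simp only [Set.mem_inter_iff, Set.mem_add, Set.mem_insert_iff, Set.mem_singleton_iff,
    SetLike.mem_coe, exists_eq_or_imp, exists_eq_left, Nat.exists_and_add_eq_iff]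
  simp only [mem_semigroup16]
  omega

section SemigroupRing16

variable {k : Type} [Field k]

lemma gens16_eq_image : gens16 k = (X ^ ·) '' {9, 11, 13, 15, 17, 19, 21, 23} := by
  simp [gens16, Set.image_insert_eq]

lemma support_subset_semigroup16 {f : k⟦X⟧} (hf : f ∈ R16 k) : f.support ⊆ semigroup16 := by
  rw [R16, gens16_eq_image] at hf
  exact support_subset_closure_of_mem_adjoin hf

lemma exists_polynomial_of_mem_R16 {f : k⟦X⟧} (hf : f ∈ R16 k) :
    ∃ p : Polynomial k, (p : k⟦X⟧) = f := by
  rw [R16, gens16_eq_image] at hf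
  exact exists_polynomial_of_mem_adjoin hf

lemma X_pow_mem_R16 {n : ℕ} (hn : n ∈ semigroup16) : (X ^ n : k⟦X⟧) ∈ R16 k := by
  rw [R16, gens16_eq_image]
  exact X_pow_mem_adjoin hn

lemma support_subset_of_mem_I16 {f : R16 k} (hf : f ∈ I16 k) :
    (f : k⟦X⟧).support ⊆ {9, 11, 13, 21} + semigroup16 := by
  refine support_subset_of_mem_span (fun a ha => support_subset_semigroup16 ha) ?_ hf
  rintro t (rfl | rfl | rfl | rfl) <;> exact ⟨_, by simp, rfl⟩

lemma support_subset_of_mem_J16 {f : R16 k} (hf : f ∈ J16 k) :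
    (f : k⟦X⟧).support ⊆ {15, 17, 19, 23} + semigroup16 := by
  refine support_subset_of_mem_span (fun a ha => support_subset_semigroup16 ha) ?_ hf
  rintro t (rfl | rfl | rfl | rfl) <;> exact ⟨_, by simp, rfl⟩

lemma subset_monomialExponents_I16 : {9, 11, 13, 21} ⊆ monomialExponents (I16 k) := by
  rintro a (rfl | rfl | rfl | rfl) <;>
    exact ⟨t16 k _ (by simp [gens16]), Ideal.subset_span (by simp), rfl⟩

lemma subset_monomialExponents_J16 : {15, 17, 19, 23} ⊆ monomialExponents (J16 k) := by
  rintro a (rfl | rfl | rfl | rfl) <;>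
    exact ⟨t16 k _ (by simp [gens16]), Ideal.subset_span (by simp), rfl⟩

end SemigroupRing16

theorem I16_inf_J16 (k : Type) [Field k] : I16 k ⊓ J16 k = I16 k * J16 k := by
  refine le_antisymm (fun f hf => ?_) Ideal.mul_le_inf
  refine mem_of_support_subset_monomialExponents (fun a ha => exists_polynomial_of_mem_R16 ha) ?_
  calc (f : k⟦X⟧).support
      ⊆ ({9, 11, 13, 21} + semigroup16 : Set ℕ) ∩ ({15, 17, 19, 23} + semigroup16) :=
        Set.subset_inter (support_subset_of_mem_I16 hf.1) (support_subset_of_mem_J16 hf.2)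
    _ ⊆ {9, 11, 13, 21} + {15, 17, 19, 23} + semigroup16 := exponents_inter_subset
    _ ⊆ monomialExponents (I16 k) + monomialExponents (J16 k) + semigroup16 :=
        Set.add_subset_add_right
          (Set.add_subset_add subset_monomialExponents_I16 subset_monomialExponents_J16)
    _ ⊆ monomialExponents (I16 k * J16 k) + semigroup16 :=
        Set.add_subset_add_right (monomialExponents_add_subset_mul _ _)
    _ ⊆ monomialExponents (I16 k * J16 k) := by
        rw [add_comm]
        exact add_monomialExponents_subset (fun s hs => X_pow_mem_R16 hs) _

/-- For `R = k[[t⁹,…,t²³]]`, `I = (t⁹,t¹¹,t¹³,t²¹)` and `J = (t¹⁵,t¹⁷,t¹⁹,t²³)`: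
`I ∩ J = I·J`, and consequently `Tor₁^R(R/I, R/J) = 0`. -/
theorem stmt16 (k : Type) [Field k] :
    I16 k ⊓ J16 k = I16 k * J16 k ∧
    Subsingleton (TorM (R16 k) 1 (R16 k ⧸ I16 k) (R16 k ⧸ J16 k)) := by
  have h := I16_inf_J16 k
  exact ⟨h, ModuleCat.subsingleton_of_isZero (isZero_Tor_one_quotient _ _
    ((injective_lTensor_quotient_iff_inf_eq_mul _ _).2 h))⟩
end
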